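/- Let n ≥ 2, let l₁, …, lₙ > 0, and let m₁, …, m_{n−1} be nonnegative integers with Σ_{i=1}^{n−1} m_i ≥ 1. Set β = (Σ_{i=1}^{n−1} (m_iπ/l_i)²)^{1/2} and let Z : ℝ → ℝ be defined by Z(s) = cosh(βs) − [((sinh(βlₙ))(cosh(βlₙ)) + βlₙ)/(sinh²(βlₙ) − β²lₙ²)]·sinh(βs) + [(β(sinh(βlₙ))(cosh(βlₙ)) + β²lₙ)/(sinh²(βlₙ) − β²lₙ²)]·s·cosh(βs) − [β·sinh²(βlₙ)/(sinh²(βlₙ) − β²lₙ²)]·s·sinh(βs). Define u : ℝⁿ → ℝ by u(x) = (Π_{i=1}^{n−1} cos(m_iπx_i/l_i))·Z(xₙ). Then: (i) Δ²u = 0 identically on ℝⁿ; (ii) ∂u/∂xₙ(x) = 0 whenever xₙ = 0; (iii) u(x) = 0 and ∂u/∂xₙ(x) = 0 whenever xₙ = lₙ; (iv) ∂u/∂x_i(x) = 0 and ∂(Δu)/∂x_i(x) = 0 whenever x_i ∈ {0, l_i} for some i ∈ {1, …, n−1}; and (v) for every x with xₙ = 0, ∂(Δu)/∂xₙ(x)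 = 2β³·[((sinh(βlₙ))(cosh(βlₙ)) + βlₙ)/(sinh²(βlₙ) − β²lₙ²)]·u(x). -/

import Mathlib

/-- Partial derivative of `u : ℝⁿ → ℝ` in the `i`-th coordinate direction. -/
noncomputable def pd {n : ℕ} (i : Fin n) (u : (Fin n → ℝ) → ℝ) : (Fin n → ℝ) → ℝ :=
  fun x => deriv (fun t => u (Function.update x i t)) (x i)

/-- Euclidean Laplacian `Δu = ∑ᵢ ∂²u/∂xᵢ²`. -/
noncomputable def lap {n : ℕ} (u : (Fin n → ℝ) → ℝ) : (Fin n → ℝ) → ℝ :=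
  fun x => ∑ i : Fin n, pd i (pd i u) x

/-!
`u` is a separated product `∏ᵢ cos(cᵢxᵢ) · Z(xₙ)` with `cᵢ = mᵢπ/lᵢ` and `∑ᵢ cᵢ² = β²`. Each
cosine factor is an eigenfunction of `d²/dt²` with eigenvalue `-cᵢ²`, and `Z` lies in the span of
`cosh(βs), sinh(βs), s cosh(βs), s sinh(βs)`, on which `Z'' - β²Z` is a combination `W` of
`cosh(βs), sinh(βs)` alone. Hence `Δu = ∏ᵢ cos(cᵢxᵢ) · W(xₙ)` and `Δ²u = 0`. The boundary
conditions reduce to one-variable facts: `sin(cᵢxᵢ) = 0` on the lateral faces, `Z'(0) = 0`,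
`Z(lₙ) = Z'(lₙ) = 0` (the coefficients of `Z` are chosen for this, via `cosh² = 1 + sinh²`) and
`W'(0) = 2β³A`, where `A` is the coefficient of `-sinh(βs)` in `Z`.
-/

open Real Finset Function

section SeparatedProduct

variable {n : ℕ}

def sepProd (g : Fin n → ℝ → ℝ) (x : Fin n → ℝ) : ℝ :=
  ∏ i, g i (x i)

lemma sepProd_eq_mul_prod_erase (g : Fin n → ℝ → ℝ) (j : Fin n) (x : Fin n → ℝ) :
    sepProd g x = g j (x j) * ∏ i ∈ univ.erase j, g i (x i) :=
  (mul_prod_erase _ _ (mem_univ j)).symm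

lemma sepProd_update (g : Fin n → ℝ → ℝ) (j : Fin n) (h : ℝ → ℝ) (x : Fin n → ℝ) :
    sepProd (update g j h) x = h (x j) * ∏ i ∈ univ.erase j, g i (x i) := by
  rw [sepProd_eq_mul_prod_erase _ j, update_self]
  congr 1
  exact prod_congr rfl fun i hi => by rw [update_of_ne (ne_of_mem_erase hi)]

lemma sepProd_update_apply (g : Fin n → ℝ → ℝ) (j : Fin n) (x : Fin n → ℝ) (t : ℝ) :
    sepProd g (update x j t) = g j t * ∏ i ∈ univ.erase j, g i (x i) := by
  rw [sepProd_eq_mul_prod_erase _ j, update_self]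
  congr 1
  exact prod_congr rfl fun i hi => by rw [update_of_ne (ne_of_mem_erase hi)]

lemma sepProd_update_mul (g : Fin n → ℝ → ℝ) (j : Fin n) (a : ℝ) (x : Fin n → ℝ) :
    sepProd (update g j fun t => a * g j t) x = a * sepProd g x := by
  rw [sepProd_update, sepProd_eq_mul_prod_erase _ j, mul_assoc]

lemma pd_sepProd {g : Fin n → ℝ → ℝ} {j : Fin n} (hg : Differentiable ℝ (g j)) :
    pd j (sepProd g) = sepProd (update g j (deriv (g j))) := by
  ext x
  simp only [pd, sepProd_update_apply, sepProd_update]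
  exact deriv_mul_const (hg _) _

lemma lap_sepProd {g : Fin n → ℝ → ℝ} (hg : ∀ j, Differentiable ℝ (g j))
    (hg' : ∀ j, Differentiable ℝ (deriv (g j))) (x : Fin n → ℝ) :
    lap (sepProd g) x = ∑ j, sepProd (update g j (deriv (deriv (g j)))) x := by
  refine sum_congr rfl fun j _ => ?_
  rw [pd_sepProd (hg j), pd_sepProd (by simpa using hg' j), update_idem, update_self]

lemma pd_sepProd_eq_zero {g : Fin n → ℝ → ℝ} {j : Fin n} {x : Fin n → ℝ}
    (hg : Differentiable ℝ (g j)) (hx : deriv (g j) (x j) = 0) : pd j (sepProd g) x = 0 := by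
  rw [pd_sepProd hg, sepProd_update, hx, zero_mul]

end SeparatedProduct

section Snoc

variable {k : ℕ}

lemma forall_snoc_of_forall {p : (ℝ → ℝ) → Prop} {F : Fin k → ℝ → ℝ} {Z : ℝ → ℝ}
    (hF : ∀ i, p (F i)) (hZ : p Z) : ∀ j, p ((Fin.snoc F Z : Fin (k + 1) → ℝ → ℝ) j) :=
  Fin.lastCases (by simpa using hZ) (by simpa using hF)

lemma sepProd_snoc (F : Fin k → ℝ → ℝ) (Z : ℝ → ℝ) (x : Fin (k + 1) → ℝ) :
    sepProd (Fin.snoc F Z : Fin (k + 1) → ℝ → ℝ) x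
      = (∏ i, F i (x i.castSucc)) * Z (x (Fin.last k)) := by
  simp [sepProd, Fin.prod_univ_castSucc]

lemma pd_last_sepProd_snoc (F : Fin k → ℝ → ℝ) {Z : ℝ → ℝ} (hZ : Differentiable ℝ Z)
    (x : Fin (k + 1) → ℝ) :
    pd (Fin.last k) (sepProd (Fin.snoc F Z : Fin (k + 1) → ℝ → ℝ)) x
      = (∏ i, F i (x i.castSucc)) * deriv Z (x (Fin.last k)) := by
  rw [pd_sepProd (by simpa using hZ), Fin.snoc_last, Fin.update_snoc_last, sepProd_snoc]

lemma lap_sepProd_snoc {a : Fin k → ℝ} {F : Fin k → ℝ → ℝ} {Z W : ℝ → ℝ}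
    (hF : ∀ i, Differentiable ℝ (F i)) (hF' : ∀ i, Differentiable ℝ (deriv (F i)))
    (hF'' : ∀ i, deriv (deriv (F i)) = fun t => a i * F i t)
    (hZ : Differentiable ℝ Z) (hZ' : Differentiable ℝ (deriv Z))
    (hZ'' : ∀ t, deriv (deriv Z) t + (∑ i, a i) * Z t = W t) :
    lap (sepProd (Fin.snoc F Z : Fin (k + 1) → ℝ → ℝ)) = sepProd (Fin.snoc F W) := by
  set g : Fin (k + 1) → ℝ → ℝ := Fin.snoc F Z
  have hg'' (i : Fin k) : deriv (deriv (g i.castSucc)) = fun t => a i * g i.castSucc t := by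
    simp [g, hF'']
  ext x
  rw [lap_sepProd (forall_snoc_of_forall hF hZ)
    (forall_snoc_of_forall (p := (Differentiable ℝ <| deriv ·)) hF' hZ'), Fin.sum_univ_castSucc]
  simp only [hg'', sepProd_update_mul, g, Fin.snoc_last, Fin.update_snoc_last, sepProd_snoc,
    ← sum_mul, ← hZ'']
  ring

end Snoc

lemma hasDerivAt_cos_mul (c t : ℝ) :
    HasDerivAt (fun t => cos (c * t)) (-(c * sin (c * t))) t := by
  simpa [mul_comm] using ((hasDerivAt_id t).const_mul c).cos

lemma deriv_cos_mul (c : ℝ) : deriv (fun t => cos (c * t)) = fun t => -(c * sin (c * t)) :=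
  funext fun t => (hasDerivAt_cos_mul c t).deriv

lemma deriv_deriv_cos_mul (c : ℝ) :
    deriv (deriv fun t => cos (c * t)) = fun t => -c ^ 2 * cos (c * t) := by
  rw [deriv_cos_mul]
  ext t
  refine (((hasDerivAt_id t).const_mul c).sin.const_mul c).fun_neg.deriv.trans ?_
  simp only [id]; ring

lemma deriv_cos_mul_eq_zero_of_mem_boundary (m : ℕ) {l x : ℝ} (hl : l ≠ 0) (hx : x = 0 ∨ x = l) :
    deriv (fun t => cos (m * π / l * t)) x = 0 := by
  rw [deriv_cos_mul, neg_eq_zero, mul_eq_zero]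
  right
  rcases hx with rfl | rfl
  · simp
  · rw [div_mul_cancel₀ _ hl, sin_nat_mul_pi]

lemma sqrt_sum_sq_pos {ι : Type*} [Fintype ι] {m : ι → ℕ} {l : ι → ℝ} (hl : ∀ i, 0 < l i)
    (hm : 1 ≤ ∑ i, m i) : 0 < √(∑ i, (m i * π / l i) ^ 2) := by
  obtain ⟨i, -, hi⟩ := exists_ne_zero_of_sum_ne_zero (by omega : ∑ i, m i ≠ 0)
  have : 0 < m i * π / l i := div_pos (mul_pos (by positivity) pi_pos) (hl i)
  exact sqrt_pos.2 (sum_pos' (fun i _ => sq_nonneg _) ⟨i, mem_univ i, by positivity⟩)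

section CoshSinhComb

noncomputable def coshSinhComb (β a b p q s : ℝ) : ℝ :=
  a * cosh (β * s) + b * sinh (β * s) + p * (s * cosh (β * s)) + q * (s * sinh (β * s))

lemma hasDerivAt_coshSinhComb (β a b p q s : ℝ) :
    HasDerivAt (coshSinhComb β a b p q)
      (coshSinhComb β (b * β + p) (a * β + q) (q * β) (p * β) s) s := by
  have hl : HasDerivAt (fun s => β * s) β s := by simpa using (hasDerivAt_id s).const_mul β
  have hc := hl.cosh
  have hs := hl.sinh
  refine ((((hc.const_mul a).fun_add (hs.const_mul b)).fun_add
    (((hasDerivAt_id' s).fun_mul hc).const_mul p)).fun_add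
      (((hasDerivAt_id' s).fun_mul hs).const_mul q)).congr_deriv ?_
  simp only [coshSinhComb]; ring

lemma deriv_coshSinhComb (β a b p q : ℝ) :
    deriv (coshSinhComb β a b p q)
      = coshSinhComb β (b * β + p) (a * β + q) (q * β) (p * β) :=
  funext fun s => (hasDerivAt_coshSinhComb β a b p q s).deriv

lemma differentiable_coshSinhComb (β a b p q : ℝ) :
    Differentiable ℝ (coshSinhComb β a b p q) :=
  fun s => (hasDerivAt_coshSinhComb β a b p q s).differentiableAt

lemma differentiable_deriv_coshSinhComb (β a b p q : ℝ) :
    Differentiable ℝ (deriv (coshSinhComb β a b p q)) := by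
  rw [deriv_coshSinhComb]
  exact differentiable_coshSinhComb _ _ _ _ _

lemma deriv_deriv_coshSinhComb (β a b p q s : ℝ) :
    deriv (deriv (coshSinhComb β a b p q)) s
      = β ^ 2 * coshSinhComb β a b p q s + coshSinhComb β (2 * q * β) (2 * p * β) 0 0 s := by
  simp only [deriv_coshSinhComb]
  unfold coshSinhComb
  ring

@[simp] lemma coshSinhComb_zero (β a b p q : ℝ) : coshSinhComb β a b p q 0 = a := by
  simp [coshSinhComb]

end CoshSinhComb

section SteklovProfile

variable (β L : ℝ)

noncomputable def steklovCoeffA : ℝ :=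
  (sinh (β * L) * cosh (β * L) + β * L) / (sinh (β * L) ^ 2 - β ^ 2 * L ^ 2)

noncomputable def steklovCoeffC : ℝ :=
  β * sinh (β * L) ^ 2 / (sinh (β * L) ^ 2 - β ^ 2 * L ^ 2)

noncomputable def steklovProfile : ℝ → ℝ :=
  coshSinhComb β 1 (-steklovCoeffA β L) (β * steklovCoeffA β L) (-steklovCoeffC β L)

noncomputable def steklovLapProfile : ℝ → ℝ :=
  coshSinhComb β (2 * -steklovCoeffC β L * β) (2 * (β * steklovCoeffA β L) * β) 0 0

@[simp] lemma steklovProfile_zero : steklovProfile β L 0 = 1 :=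
  coshSinhComb_zero _ _ _ _ _

lemma differentiable_steklovProfile : Differentiable ℝ (steklovProfile β L) :=
  differentiable_coshSinhComb _ _ _ _ _

lemma deriv_steklovProfile_zero : deriv (steklovProfile β L) 0 = 0 := by
  rw [steklovProfile, deriv_coshSinhComb, coshSinhComb_zero]
  ring

lemma differentiable_steklovLapProfile : Differentiable ℝ (steklovLapProfile β L) :=
  differentiable_coshSinhComb _ _ _ _ _

lemma deriv_steklovLapProfile_zero :
    deriv (steklovLapProfile β L) 0 = 2 * β ^ 3 * steklovCoeffA β L := by
  rw [steklovLapProfile, deriv_coshSinhComb, coshSinhComb_zero]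
  ring

variable {β L}

lemma sinh_sq_sub_sq_mul_sq_ne_zero (h : 0 < β * L) : sinh (β * L) ^ 2 - β ^ 2 * L ^ 2 ≠ 0 := by
  nlinarith [pow_lt_pow_left₀ (self_lt_sinh_iff.2 h) h.le two_ne_zero]

lemma steklovProfile_self (h : 0 < β * L) : steklovProfile β L L = 0 := by
  have hD := sinh_sq_sub_sq_mul_sq_ne_zero h
  simp only [steklovProfile, coshSinhComb, steklovCoeffA, steklovCoeffC]
  field_simp
  linear_combination (sinh (β * L) * β * L) * cosh_sq (β * L)

lemma deriv_steklovProfile_self (h : 0 < β * L) : deriv (steklovProfile β L) L = 0 := by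
  have hD := sinh_sq_sub_sq_mul_sq_ne_zero h
  simp only [steklovProfile, deriv_coshSinhComb, coshSinhComb, steklovCoeffA, steklovCoeffC]
  field_simp
  ring

end SteklovProfile

section CosineModes

variable {k : ℕ}

lemma lap_sepProd_snoc_cos_coshSinhComb {c : Fin k → ℝ} {β : ℝ} (hβ : β ^ 2 = ∑ i, c i ^ 2)
    (a b p q : ℝ) :
    lap (sepProd (Fin.snoc (fun i t => cos (c i * t)) (coshSinhComb β a b p q)))
      = sepProd (Fin.snoc (fun i t => cos (c i * t))
          (coshSinhComb β (2 * q * β) (2 * p * β) 0 0)) := by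
  refine lap_sepProd_snoc (a := fun i => -c i ^ 2) (fun i => by fun_prop)
    (fun i => by simp only [deriv_cos_mul]; fun_prop) (fun i => deriv_deriv_cos_mul (c i))
    (differentiable_coshSinhComb _ _ _ _ _) (differentiable_deriv_coshSinhComb _ _ _ _ _)
    fun t => ?_
  rw [deriv_deriv_coshSinhComb, sum_neg_distrib, ← hβ]
  ring

lemma pd_castSucc_sepProd_snoc_cos_eq_zero (m : Fin k → ℕ) {l : Fin k → ℝ} (hl : ∀ i, l i ≠ 0)
    (Z : ℝ → ℝ) {x : Fin (k + 1) → ℝ} {i : Fin k} (hx : x i.castSucc = 0 ∨ x i.castSucc = l i) :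
    pd i.castSucc (sepProd (Fin.snoc (fun i t => cos (m i * π / l i * t)) Z)) x = 0 :=
  pd_sepProd_eq_zero (by simp only [Fin.snoc_castSucc]; fun_prop)
    (by simpa using deriv_cos_mul_eq_zero_of_mem_boundary (m i) (hl i) hx)

end CosineModes

theorem biharmonic_steklov_eigenfunction_neumann_lateral_general
    (k : ℕ) (l : Fin (k + 1) → ℝ) (hl : ∀ i, 0 < l i)
    (m : Fin k → ℕ) (hm : 1 ≤ ∑ i : Fin k, m i)
    (β : ℝ)
    (hβ : β = Real.sqrt (∑ i : Fin k, ((m i : ℝ) * Real.pi / l i.castSucc) ^ 2))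
    (Z : ℝ → ℝ)
    (hZ : ∀ s : ℝ, Z s =
      Real.cosh (β * s)
      - ((Real.sinh (β * l (Fin.last k)) * Real.cosh (β * l (Fin.last k))
            + β * l (Fin.last k)) /
          (Real.sinh (β * l (Fin.last k)) ^ 2 - β ^ 2 * l (Fin.last k) ^ 2))
          * Real.sinh (β * s)
      + ((β * Real.sinh (β * l (Fin.last k)) * Real.cosh (β * l (Fin.last k))
            + β ^ 2 * l (Fin.last k)) /
          (Real.sinh (β * l (Fin.last k)) ^ 2 - β ^ 2 * l (Fin.last k) ^ 2))
          * s * Real.cosh (β * s)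
      - ((β * Real.sinh (β * l (Fin.last k)) ^ 2) /
          (Real.sinh (β * l (Fin.last k)) ^ 2 - β ^ 2 * l (Fin.last k) ^ 2))
          * s * Real.sinh (β * s))
    (u : (Fin (k + 1) → ℝ) → ℝ)
    (hu : ∀ x : Fin (k + 1) → ℝ, u x =
      (∏ i : Fin k,
        Real.cos ((m i : ℝ) * Real.pi * x i.castSucc / l i.castSucc)) *
      Z (x (Fin.last k))) :
    (∀ x : Fin (k + 1) → ℝ, lap (lap u) x = 0) ∧
    (∀ x : Fin (k + 1) → ℝ, x (Fin.last k) = 0 → pd (Fin.last k) u x = 0) ∧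
    (∀ x : Fin (k + 1) → ℝ, x (Fin.last k) = l (Fin.last k) →
      u x = 0 ∧ pd (Fin.last k) u x = 0) ∧
    (∀ (x : Fin (k + 1) → ℝ) (i : Fin k),
      (x i.castSucc = 0 ∨ x i.castSucc = l i.castSucc) →
        pd i.castSucc u x = 0 ∧ pd i.castSucc (lap u) x = 0) ∧
    (∀ x : Fin (k + 1) → ℝ, x (Fin.last k) = 0 →
      pd (Fin.last k) (lap u) x =
        2 * β ^ 3 *
          ((Real.sinh (β * l (Fin.last k)) * Real.cosh (β * l (Fin.last k))
              + β * l (Fin.last k)) /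
            (Real.sinh (β * l (Fin.last k)) ^ 2 - β ^ 2 * l (Fin.last k) ^ 2)) *
          u x) := by
  set L := l (Fin.last k)
  set F : Fin k → ℝ → ℝ := fun i t => cos (m i * π / l i.castSucc * t)
  have hβL : 0 < β * L := mul_pos (hβ ▸ sqrt_sum_sq_pos (fun i => hl _) hm) (hl _)
  have hβ2 : β ^ 2 = ∑ i, (m i * π / l i.castSucc) ^ 2 := by rw [hβ, sq_sqrt (by positivity)]
  have hZ' : Z = steklovProfile β L := funext fun s => by
    rw [hZ]; simp only [steklovProfile, coshSinhComb, steklovCoeffA, steklovCoeffC]; ring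
  have hu' : u = sepProd (Fin.snoc F (steklovProfile β L)) := by
    ext x
    rw [hu, sepProd_snoc, hZ']
    congr 1
    exact prod_congr rfl fun i _ => congrArg cos (by ring)
  have hlapu : lap u = sepProd (Fin.snoc F (steklovLapProfile β L)) :=
    hu' ▸ lap_sepProd_snoc_cos_coshSinhComb hβ2 _ _ _ _
  have hlat := pd_castSucc_sepProd_snoc_cos_eq_zero m (fun i => (hl i.castSucc).ne')
  refine ⟨fun x => ?_, fun x hx => ?_, fun x hx => ⟨?_, ?_⟩,
    fun x i hi => ⟨hu' ▸ hlat _ hi, hlapu ▸ hlat _ hi⟩, fun x hx => ?_⟩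
  · rw [hlapu, steklovLapProfile, lap_sepProd_snoc_cos_coshSinhComb hβ2, sepProd_snoc]
    simp [coshSinhComb]
  · rw [hu', pd_last_sepProd_snoc _ (differentiable_steklovProfile _ _), hx,
      deriv_steklovProfile_zero, mul_zero]
  · rw [hu', sepProd_snoc, hx, steklovProfile_self hβL, mul_zero]
  · rw [hu', pd_last_sepProd_snoc _ (differentiable_steklovProfile _ _), hx,
      deriv_steklovProfile_self hβL, mul_zero]
  · rw [hlapu, pd_last_sepProd_snoc _ (differentiable_steklovLapProfile _ _), hu', sepProd_snoc,
      hx, deriv_steklovLapProfile_zero, steklovProfile_zero, steklovCoeffA]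
    ring

/-- The separated biharmonic functions
`u(x) = (∏ᵢ cos(mᵢπxᵢ/lᵢ)) Z(xₙ)` on the box `[0,l₁] × ⋯ × [0,l_{k+1}]`
(dimension `n = k+1 ≥ 2`, nonnegative integers `m₁,…,m_k` not all zero) satisfy
`Δ²u = 0`, `∂u/∂xₙ = 0` on `{xₙ = 0}`, `u = ∂u/∂xₙ = 0` on `{xₙ = lₙ}`,
`∂u/∂xᵢ = ∂(Δu)/∂xᵢ = 0` on the lateral faces, and
`∂(Δu)/∂xₙ = 2β³ ((sinh βlₙ cosh βlₙ + βlₙ)/(sinh² βlₙ − β²lₙ²)) u` on `{xₙ = 0}`,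
where `β = (∑ᵢ (mᵢπ/lᵢ)²)^{1/2}`. -/
theorem biharmonic_steklov_eigenfunction_neumann_lateral
    (k : ℕ) (hk : 1 ≤ k) (l : Fin (k + 1) → ℝ) (hl : ∀ i, 0 < l i)
    (m : Fin k → ℕ) (hm : 1 ≤ ∑ i : Fin k, m i)
    (β : ℝ)
    (hβ : β = Real.sqrt (∑ i : Fin k, ((m i : ℝ) * Real.pi / l i.castSucc) ^ 2))
    (Z : ℝ → ℝ)
    (hZ : ∀ s : ℝ, Z s =
      Real.cosh (β * s)
      - ((Real.sinh (β * l (Fin.last k)) * Real.cosh (β * l (Fin.last k))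
            + β * l (Fin.last k)) /
          (Real.sinh (β * l (Fin.last k)) ^ 2 - β ^ 2 * l (Fin.last k) ^ 2))
          * Real.sinh (β * s)
      + ((β * Real.sinh (β * l (Fin.last k)) * Real.cosh (β * l (Fin.last k))
            + β ^ 2 * l (Fin.last k)) /
          (Real.sinh (β * l (Fin.last k)) ^ 2 - β ^ 2 * l (Fin.last k) ^ 2))
          * s * Real.cosh (β * s)
      - ((β * Real.sinh (β * l (Fin.last k)) ^ 2) /
          (Real.sinh (β * l (Fin.last k)) ^ 2 - β ^ 2 * l (Fin.last k) ^ 2))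
          * s * Real.sinh (β * s))
    (u : (Fin (k + 1) → ℝ) → ℝ)
    (hu : ∀ x : Fin (k + 1) → ℝ, u x =
      (∏ i : Fin k,
        Real.cos ((m i : ℝ) * Real.pi * x i.castSucc / l i.castSucc)) *
      Z (x (Fin.last k))) :
    (∀ x : Fin (k + 1) → ℝ, lap (lap u) x = 0) ∧
    (∀ x : Fin (k + 1) → ℝ, x (Fin.last k) = 0 → pd (Fin.last k) u x = 0) ∧
    (∀ x : Fin (k + 1) → ℝ, x (Fin.last k) = l (Fin.last k) →
      u x = 0 ∧ pd (Fin.last k) u x = 0) ∧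
    (∀ (x : Fin (k + 1) → ℝ) (i : Fin k),
      (x i.castSucc = 0 ∨ x i.castSucc = l i.castSucc) →
        pd i.castSucc u x = 0 ∧ pd i.castSucc (lap u) x = 0) ∧
    (∀ x : Fin (k + 1) → ℝ, x (Fin.last k) = 0 →
      pd (Fin.last k) (lap u) x =
        2 * β ^ 3 *
          ((Real.sinh (β * l (Fin.last k)) * Real.cosh (β * l (Fin.last k))
              + β * l (Fin.last k)) /
            (Real.sinh (β * l (Fin.last k)) ^ 2 - β ^ 2 * l (Fin.last k) ^ 2)) *
          u x) :=
  biharmonic_steklov_eigenfunction_neumann_lateral_general k l hl m hm β hβ Z hZ u hu
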